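/- Let H be a hypergraph on a finite vertex set and let f, g : H → ℝ be two functions with ‖f − g‖_∞ = sup_{σ∈H} |f(σ) − g(σ)| = δ. Then for every a ∈ ℝ one has inclusions of hypergraphs H^f_a ⊆ H^g_{a+δ} and H^f_{ā} ⊆ H^g_{(а−δ)‾} (and symmetrically exchanging f and g), and consequently the extended persistence modules V^f_p and V^g_p of embedded homology are δ-interleaved for every p. -/

import Mathlib

/-- The extended parameter poset `E = ℝ ∪ {∞} ∪ ℝᵒ`. -/
inductive EPt : Type where
  | real : ℝ → EPt
  | infty : EPt
  | coreal : ℝ → EPt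

namespace EPt

/-- The order on `E`. -/
def le : EPt → EPt → Prop
  | real a, real b => a ≤ b
  | real _, infty => True
  | real _, coreal _ => True
  | infty, infty => True
  | infty, coreal _ => True
  | coreal a, coreal b => b ≤ a
  | _, _ => False

instance : PartialOrder EPt where
  le := le
  le_refl x := by cases x <;> simp [le]
  le_trans x y z hxy hyz := by
    cases x <;> cases y <;> cases z <;> simp_all [le] <;> linarith
  le_antisymm x y hxy hyx := by
    cases x <;> cases y <;> simp_all [le] <;> linarith

end EPt

/-- An extended persistence module. -/
structure PersMod (k : Type) [Field k] where
  V : EPt → Type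
  [acg : ∀ x, AddCommGroup (V x)]
  [mod : ∀ x, Module k (V x)]
  map : ∀ {x y : EPt}, x ≤ y → (V x →ₗ[k] V y)
  map_id : ∀ (x : EPt) (h : x ≤ x), map h = LinearMap.id
  map_comp : ∀ {x y z : EPt} (h1 : x ≤ y) (h2 : y ≤ z),
    map (le_trans h1 h2) = (map h2).comp (map h1)

attribute [instance] PersMod.acg PersMod.mod

/-- `V` and `W` are `ε`-interleaved: there is a quadruple of families of maps
`φ_a, φ_b̄, ψ_a, ψ_b̄` shifted by `ε` satisfying the naturality conditions (i),
(i') and the triangle conditions (ii), (ii') of Definition 5.5. -/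
def IsInterleaved (k : Type) [Field k] (V W : PersMod k) (ε : ℝ) (hε : 0 ≤ ε) :
    Prop :=
  ∃ (φr : ∀ a : ℝ, V.V (.real a) →ₗ[k] W.V (.real (a + ε)))
    (φc : ∀ b : ℝ, V.V (.coreal b) →ₗ[k] W.V (.coreal (b - ε)))
    (ψr : ∀ a : ℝ, W.V (.real a) →ₗ[k] V.V (.real (a + ε)))
    (ψc : ∀ b : ℝ, W.V (.coreal b) →ₗ[k] V.V (.coreal (b - ε))),
    -- (i) naturality for φ
    (∀ (a a' : ℝ) (h : a ≤ a'),
      (W.map (show EPt.real (a + ε) ≤ EPt.real (a' + ε) from by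
        change a + ε ≤ a' + ε; linarith)).comp (φr a)
        = (φr a').comp (V.map (show EPt.real a ≤ EPt.real a' from h))) ∧
    (∀ a b : ℝ,
      (W.map (show EPt.real (a + ε) ≤ EPt.coreal (b - ε) from trivial)).comp (φr a)
        = (φc b).comp (V.map (show EPt.real a ≤ EPt.coreal b from trivial))) ∧
    (∀ (b b' : ℝ) (h : b' ≤ b),
      (W.map (show EPt.coreal (b - ε) ≤ EPt.coreal (b' - ε) from
        sub_le_sub_right h ε)).comp (φc b)
        = (φc b').comp (V.map (show EPt.coreal b ≤ EPt.coreal b' from h))) ∧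
    -- (i') naturality for ψ
    (∀ (a a' : ℝ) (h : a ≤ a'),
      (V.map (show EPt.real (a + ε) ≤ EPt.real (a' + ε) from by
        change a + ε ≤ a' + ε; linarith)).comp (ψr a)
        = (ψr a').comp (W.map (show EPt.real a ≤ EPt.real a' from h))) ∧
    (∀ a b : ℝ,
      (V.map (show EPt.real (a + ε) ≤ EPt.coreal (b - ε) from trivial)).comp (ψr a)
        = (ψc b).comp (W.map (show EPt.real a ≤ EPt.coreal b from trivial))) ∧
    (∀ (b b' : ℝ) (h : b' ≤ b),
      (V.map (show EPt.coreal (b - ε) ≤ EPt.coreal (b' - ε) from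
        sub_le_sub_right h ε)).comp (ψc b)
        = (ψc b').comp (W.map (show EPt.coreal b ≤ EPt.coreal b' from h))) ∧
    -- (ii) triangle conditions
    (∀ a : ℝ, (ψr (a + ε)).comp (φr a)
        = V.map (show EPt.real a ≤ EPt.real (a + ε + ε) from by
            change a ≤ a + ε + ε; linarith)) ∧
    (∀ b : ℝ, (ψc (b - ε)).comp (φc b)
        = V.map (show EPt.coreal b ≤ EPt.coreal (b - ε - ε) from by
            change b - ε - ε ≤ b; linarith)) ∧
    -- (ii')
    (∀ a : ℝ, (φr (a + ε)).comp (ψr a)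
        = W.map (show EPt.real a ≤ EPt.real (a + ε + ε) from by
            change a ≤ a + ε + ε; linarith)) ∧
    (∀ b : ℝ, (φc (b - ε)).comp (ψc b)
        = W.map (show EPt.coreal b ≤ EPt.coreal (b - ε - ε) from by
            change b - ε - ε ≤ b; linarith))


open Submodule

/-! ## Simplicial chains on a (linearly ordered) vertex set and embedded
homology of hypergraphs.  As ambient simplicial complex we use the full
simplex on the vertex set `V`, which contains `K_H`; by Remark 2.2 of the
paper this does not change the embedded homology. -/

/-- Oriented simplicial `p`-chains on the full simplex on `V`: formal
`k`-linear combinations of `(p+1)`-element subsets of `V`. -/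
abbrev SimpChains (k V : Type) [Field k] (p : ℕ) : Type :=
  {s : Finset V // s.card = p + 1} →₀ k

/-- The simplicial boundary operator `∂ : Δ_{p+1} → Δ_p`. -/
noncomputable def simpBoundary (k V : Type) [Field k] [LinearOrder V] (p : ℕ) :
    SimpChains k V (p + 1) →ₗ[k] SimpChains k V p :=
  Finsupp.lift (SimpChains k V p) k {s : Finset V // s.card = p + 2} fun s =>
    ∑ x ∈ (s : Finset V).attach,
      ((-1 : k) ^ (((s : Finset V).filter (fun y => y < x.val)).card)) •
        Finsupp.single
          ⟨(s : Finset V).erase x.val, by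
            simp [Finset.card_erase_of_mem x.2, s.2]⟩ 1

/-- The boundary operator out of degree `p` (zero in degree `0`). -/
noncomputable def simpBoundaryFrom (k V : Type) [Field k] [LinearOrder V] :
    ∀ p : ℕ, SimpChains k V p →ₗ[k] SimpChains k V (p - 1)
  | 0 => 0
  | (q + 1) => simpBoundary k V q

/-- The graded subgroup `Δ_p(H)` spanned by the hyperedges of the hypergraph
`H` (a set of nonempty finite subsets of `V`). -/
noncomputable def hgSub (k V : Type) [Field k] (H : Set (Finset V)) (p : ℕ) :
    Submodule k (SimpChains k V p) :=
  Submodule.span k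
    {g | ∃ s : {s : Finset V // s.card = p + 1}, (s : Finset V) ∈ H ∧
      g = Finsupp.single s 1}

/-- The supremum complex `S_p(H) = Δ_p(H) + ∂ Δ_{p+1}(H)`. -/
noncomputable def hgSupCx (k V : Type) [Field k] [LinearOrder V]
    (H : Set (Finset V)) (p : ℕ) : Submodule k (SimpChains k V p) :=
  hgSub k V H p ⊔ Submodule.map (simpBoundary k V p) (hgSub k V H (p + 1))

/-! ## Subquotient homology and inclusion-induced maps -/

/-- `RelH Z B = Z / (B ∩ Z)`. -/
abbrev RelH {k M : Type*} [Field k] [AddCommGroup M] [Module k M]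
    (Z B : Submodule k M) : Type _ :=
  ↥Z ⧸ Submodule.comap Z.subtype B

/-- The map between subquotient homologies induced by inclusions. -/
noncomputable def RelHmap {k M : Type*} [Field k] [AddCommGroup M] [Module k M]
    {Z₁ Z₂ B₁ B₂ : Submodule k M} (hZ : Z₁ ≤ Z₂) (hB : B₁ ≤ B₂) :
    RelH Z₁ B₁ →ₗ[k] RelH Z₂ B₂ :=
  Submodule.mapQ _ _ (Submodule.inclusion hZ)
    (fun x hx => by
      simp only [Submodule.mem_comap, Submodule.subtype_apply] at hx ⊢
      rw [Submodule.coe_inclusion]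
      exact hB hx)

theorem RelHmap_id {k M : Type*} [Field k] [AddCommGroup M] [Module k M]
    (Z B : Submodule k M) :
    RelHmap (le_refl Z) (le_refl B) = LinearMap.id := by
  apply LinearMap.ext
  intro z
  obtain ⟨x, rfl⟩ := Submodule.Quotient.mk_surjective _ z
  have hx : Submodule.inclusion (le_refl Z) x = x :=
    Subtype.ext (Submodule.coe_inclusion _ x)
  simp [RelHmap, Submodule.mapQ_apply, hx]

theorem RelHmap_comp {k M : Type*} [Field k] [AddCommGroup M] [Module k M]
    {Z₁ Z₂ Z₃ B₁ B₂ B₃ : Submodule k M}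
    (hZ₁ : Z₁ ≤ Z₂) (hB₁ : B₁ ≤ B₂) (hZ₂ : Z₂ ≤ Z₃) (hB₂ : B₂ ≤ B₃) :
    (RelHmap hZ₂ hB₂).comp (RelHmap hZ₁ hB₁)
      = RelHmap (hZ₁.trans hZ₂) (hB₁.trans hB₂) := by
  apply LinearMap.ext
  intro z
  obtain ⟨x, rfl⟩ := Submodule.Quotient.mk_surjective _ z
  have hx : Submodule.inclusion hZ₂ (Submodule.inclusion hZ₁ x)
      = Submodule.inclusion (hZ₁.trans hZ₂) x := by
    apply Subtype.ext
    simp [Submodule.coe_inclusion]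
  simp [RelHmap, Submodule.mapQ_apply, hx]

/-! ## The extended persistence module of a hypergraph with a function on its
hyperedges -/

/-- The hypergraph associated to a point of `E`: the sublevel hypergraph
`H^f_a` at `a ∈ ℝ`, and all of `H` at `∞` and at co-reals. -/
def hgAt {V : Type} (H : Set (Finset V)) (f : Finset V → ℝ) :
    EPt → Set (Finset V)
  | .real a => {σ ∈ H | f σ ≤ a}
  | .infty => H
  | .coreal _ => H

/-- The "relative part" at a point of `E`: zero at reals and at `∞`, the
supremum complex of the superlevel hypergraph `H^f_{ā}` at a co-real `ā`. -/
noncomputable def hgRelPartAt (k V : Type) [Field k] [LinearOrder V]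
    (H : Set (Finset V)) (f : Finset V → ℝ) (n : ℕ) :
    EPt → Submodule k (SimpChains k V n)
  | .real _ => ⊥
  | .infty => ⊥
  | .coreal b => hgSupCx k V {σ ∈ H | b ≤ f σ} n

/-- Relative cycles of the extended persistence module `V^f_p` at `x ∈ E`. -/
noncomputable def hgCycOf (k V : Type) [Field k] [LinearOrder V]
    (H : Set (Finset V)) (f : Finset V → ℝ) (p : ℕ) (x : EPt) :
    Submodule k (SimpChains k V p) :=
  hgSupCx k V (hgAt H f x) p ⊓
    Submodule.comap (simpBoundaryFrom k V p) (hgRelPartAt k V H f (p - 1) x)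

/-- Relative boundaries of the extended persistence module `V^f_p` at `x`. -/
noncomputable def hgBdryOf (k V : Type) [Field k] [LinearOrder V]
    (H : Set (Finset V)) (f : Finset V → ℝ) (p : ℕ) (x : EPt) :
    Submodule k (SimpChains k V p) :=
  Submodule.map (simpBoundary k V p) (hgSupCx k V (hgAt H f x) (p + 1)) ⊔
    hgRelPartAt k V H f p x

theorem hgSub_mono (k V : Type) [Field k] {H₁ H₂ : Set (Finset V)}
    (h : H₁ ⊆ H₂) (p : ℕ) : hgSub k V H₁ p ≤ hgSub k V H₂ p := by
  apply Submodule.span_mono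
  rintro g ⟨s, hs, rfl⟩
  exact ⟨s, h hs, rfl⟩

theorem hgSupCx_mono (k V : Type) [Field k] [LinearOrder V]
    {H₁ H₂ : Set (Finset V)} (h : H₁ ⊆ H₂) (p : ℕ) :
    hgSupCx k V H₁ p ≤ hgSupCx k V H₂ p :=
  sup_le_sup (hgSub_mono k V h p)
    (Submodule.map_mono (hgSub_mono k V h (p + 1)))

theorem hgAt_mono {V : Type} (H : Set (Finset V)) (f : Finset V → ℝ)
    {x y : EPt} (h : x ≤ y) : hgAt H f x ⊆ hgAt H f y := by
  cases x with
  | real a =>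
    cases y with
    | real b => exact fun σ hσ => ⟨hσ.1, hσ.2.trans (h : a ≤ b)⟩
    | infty => exact fun σ hσ => hσ.1
    | coreal b => exact fun σ hσ => hσ.1
  | infty =>
    cases y with
    | real b => exact (h : False).elim
    | infty => exact subset_rfl
    | coreal b => exact subset_rfl
  | coreal a =>
    cases y with
    | real b => exact (h : False).elim
    | infty => exact (h : False).elim
    | coreal b => exact subset_rfl

theorem hgRelPartAt_mono (k V : Type) [Field k] [LinearOrder V]
    (H : Set (Finset V)) (f : Finset V → ℝ) (n : ℕ) {x y : EPt} (h : x ≤ y) :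
    hgRelPartAt k V H f n x ≤ hgRelPartAt k V H f n y := by
  cases x with
  | real a =>
    cases y with
    | real b => exact le_refl _
    | infty => exact bot_le
    | coreal b => exact bot_le
  | infty =>
    cases y with
    | real b => exact (h : False).elim
    | infty => exact le_refl _
    | coreal b => exact bot_le
  | coreal a =>
    cases y with
    | real b => exact (h : False).elim
    | infty => exact (h : False).elim
    | coreal b =>
      exact hgSupCx_mono k V
        (show {σ ∈ H | a ≤ f σ} ⊆ {σ ∈ H | b ≤ f σ} from
          fun σ hσ => ⟨hσ.1, le_trans (h : b ≤ a) hσ.2⟩) n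

theorem hgCycOf_mono (k V : Type) [Field k] [LinearOrder V]
    (H : Set (Finset V)) (f : Finset V → ℝ) (p : ℕ) {x y : EPt} (h : x ≤ y) :
    hgCycOf k V H f p x ≤ hgCycOf k V H f p y :=
  inf_le_inf (hgSupCx_mono k V (hgAt_mono H f h) p)
    (Submodule.comap_mono (hgRelPartAt_mono k V H f (p - 1) h))

theorem hgBdryOf_mono (k V : Type) [Field k] [LinearOrder V]
    (H : Set (Finset V)) (f : Finset V → ℝ) (p : ℕ) {x y : EPt} (h : x ≤ y) :
    hgBdryOf k V H f p x ≤ hgBdryOf k V H f p y :=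
  sup_le_sup
    (Submodule.map_mono (hgSupCx_mono k V (hgAt_mono H f h) (p + 1)))
    (hgRelPartAt_mono k V H f p h)

/-- The extended persistence module `V^f_p` of embedded homology of the
hypergraph `H` with respect to `f`: `H_p(H^f_a)` at reals, `H_p(H)` at `∞`,
and relative embedded homology `H_p(H, H^f_{ā})` at co-reals, with all maps
induced by inclusion. -/
noncomputable def hgPersMod (k V : Type) [Field k] [LinearOrder V]
    (H : Set (Finset V)) (f : Finset V → ℝ) (p : ℕ) : PersMod k where
  V x := RelH (hgCycOf k V H f p x) (hgBdryOf k V H f p x)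
  acg := fun x => inferInstanceAs
    (AddCommGroup (RelH (hgCycOf k V H f p x) (hgBdryOf k V H f p x)))
  mod := fun x => inferInstanceAs
    (Module k (RelH (hgCycOf k V H f p x) (hgBdryOf k V H f p x)))
  map {x y} h := RelHmap (hgCycOf_mono k V H f p h) (hgBdryOf_mono k V H f p h)
  map_id x h := RelHmap_id _ _
  map_comp h1 h2 := (RelHmap_comp _ _ _ _).symm

def EPt.shift (ε : ℝ) : EPt → EPt
  | .real a => .real (a + ε)
  | .infty => .infty
  | .coreal b => .coreal (b - ε)

section Subquotients

variable {k M : Type} [Field k] [AddCommGroup M] [Module k M]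

theorem RelHmap_comp_eq_comp {Z₁ Z₂ Z₂' Z₃ B₁ B₂ B₂' B₃ : Submodule k M}
    (hZ₁ : Z₁ ≤ Z₂) (hB₁ : B₁ ≤ B₂) (hZ₂ : Z₂ ≤ Z₃) (hB₂ : B₂ ≤ B₃)
    (hZ₁' : Z₁ ≤ Z₂') (hB₁' : B₁ ≤ B₂') (hZ₂' : Z₂' ≤ Z₃) (hB₂' : B₂' ≤ B₃) :
    (RelHmap hZ₂ hB₂).comp (RelHmap hZ₁ hB₁) = (RelHmap hZ₂' hB₂').comp (RelHmap hZ₁' hB₁') := by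
  rw [RelHmap_comp, RelHmap_comp]

noncomputable def PersMod.ofSubquotients (Z B : EPt → Submodule k M)
    (hZ : Monotone Z) (hB : Monotone B) : PersMod k where
  V x := RelH (Z x) (B x)
  map h := RelHmap (hZ h) (hB h)
  map_id _ _ := RelHmap_id _ _
  map_comp _ _ := (RelHmap_comp _ _ _ _).symm

/-- All maps involved are induced by inclusions of subquotients of the same module, so every
naturality square and every triangle commutes. -/
theorem PersMod.isInterleaved_ofSubquotients {Z₁ B₁ Z₂ B₂ : EPt → Submodule k M}
    (hZ₁ : Monotone Z₁) (hB₁ : Monotone B₁) (hZ₂ : Monotone Z₂) (hB₂ : Monotone B₂)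
    {ε : ℝ} (hε : 0 ≤ ε)
    (hZ₁₂ : ∀ x, Z₁ x ≤ Z₂ (x.shift ε)) (hB₁₂ : ∀ x, B₁ x ≤ B₂ (x.shift ε))
    (hZ₂₁ : ∀ x, Z₂ x ≤ Z₁ (x.shift ε)) (hB₂₁ : ∀ x, B₂ x ≤ B₁ (x.shift ε)) :
    IsInterleaved k (ofSubquotients Z₁ B₁ hZ₁ hB₁) (ofSubquotients Z₂ B₂ hZ₂ hB₂) ε hε := by
  refine ⟨fun a => RelHmap (hZ₁₂ (.real a)) (hB₁₂ (.real a)),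
    fun b => RelHmap (hZ₁₂ (.coreal b)) (hB₁₂ (.coreal b)),
    fun a => RelHmap (hZ₂₁ (.real a)) (hB₂₁ (.real a)),
    fun b => RelHmap (hZ₂₁ (.coreal b)) (hB₂₁ (.coreal b)),
    ?_, ?_, ?_, ?_, ?_, ?_, ?_, ?_, ?_, ?_⟩ <;>
  intros <;> dsimp only [ofSubquotients] <;>
  first
  | exact RelHmap_comp _ _ _ _
  | exact RelHmap_comp_eq_comp _ _ _ _ _ _ _ _

end Subquotients

theorem sublevel_subset_sublevel_add {α : Type*} {H : Set α} {f g : α → ℝ} {δ : ℝ}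
    (hδ : ∀ σ ∈ H, |f σ - g σ| ≤ δ) (a : ℝ) :
    {σ ∈ H | f σ ≤ a} ⊆ {σ ∈ H | g σ ≤ a + δ} := fun σ ⟨hσ, hfσ⟩ =>
  ⟨hσ, by linarith [(abs_le.1 (hδ σ hσ)).1]⟩

theorem superlevel_subset_superlevel_sub {α : Type*} {H : Set α} {f g : α → ℝ} {δ : ℝ}
    (hδ : ∀ σ ∈ H, |f σ - g σ| ≤ δ) (a : ℝ) :
    {σ ∈ H | a ≤ f σ} ⊆ {σ ∈ H | a - δ ≤ g σ} := fun σ ⟨hσ, hfσ⟩ =>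
  ⟨hσ, by linarith [(abs_le.1 (hδ σ hσ)).2]⟩

theorem hgAt_subset_hgAt_shift {V : Type} {H : Set (Finset V)} {f g : Finset V → ℝ} {δ : ℝ}
    (hsub : ∀ a, {σ ∈ H | f σ ≤ a} ⊆ {σ ∈ H | g σ ≤ a + δ}) :
    ∀ x, hgAt H f x ⊆ hgAt H g (x.shift δ)
  | .real a => hsub a
  | .infty | .coreal _ => subset_rfl

section ShiftedInclusions

variable {k V : Type} [Field k] [LinearOrder V] {H : Set (Finset V)} {f g : Finset V → ℝ}
  {δ : ℝ}

theorem hgRelPartAt_le_hgRelPartAt_shift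
    (hsuper : ∀ a, {σ ∈ H | a ≤ f σ} ⊆ {σ ∈ H | a - δ ≤ g σ}) (n : ℕ) :
    ∀ x, hgRelPartAt k V H f n x ≤ hgRelPartAt k V H g n (x.shift δ)
  | .real _ | .infty => le_rfl
  | .coreal b => hgSupCx_mono k V (hsuper b) n

theorem hgCycOf_le_hgCycOf_shift
    (hsub : ∀ a, {σ ∈ H | f σ ≤ a} ⊆ {σ ∈ H | g σ ≤ a + δ})
    (hsuper : ∀ a, {σ ∈ H | a ≤ f σ} ⊆ {σ ∈ H | a - δ ≤ g σ}) (p : ℕ) (x : EPt) :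
    hgCycOf k V H f p x ≤ hgCycOf k V H g p (x.shift δ) :=
  inf_le_inf (hgSupCx_mono k V (hgAt_subset_hgAt_shift hsub x) p)
    (comap_mono (hgRelPartAt_le_hgRelPartAt_shift hsuper (p - 1) x))

theorem hgBdryOf_le_hgBdryOf_shift
    (hsub : ∀ a, {σ ∈ H | f σ ≤ a} ⊆ {σ ∈ H | g σ ≤ a + δ})
    (hsuper : ∀ a, {σ ∈ H | a ≤ f σ} ⊆ {σ ∈ H | a - δ ≤ g σ}) (p : ℕ) (x : EPt) :
    hgBdryOf k V H f p x ≤ hgBdryOf k V H g p (x.shift δ) :=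
  sup_le_sup (map_mono (hgSupCx_mono k V (hgAt_subset_hgAt_shift hsub x) (p + 1)))
    (hgRelPartAt_le_hgRelPartAt_shift hsuper p x)

end ShiftedInclusions

theorem hypergraph_homology_stability_general (k V : Type) [Field k] [LinearOrder V]
    (H : Set (Finset V))
    (f g : Finset V → ℝ) (δ : ℝ) (hδ0 : 0 ≤ δ)
    (hδ : ∀ σ ∈ H, |f σ - g σ| ≤ δ) :
    (∀ a : ℝ, {σ ∈ H | f σ ≤ a} ⊆ {σ ∈ H | g σ ≤ a + δ}) ∧
    (∀ a : ℝ, {σ ∈ H | a ≤ f σ} ⊆ {σ ∈ H | a - δ ≤ g σ}) ∧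
    (∀ a : ℝ, {σ ∈ H | g σ ≤ a} ⊆ {σ ∈ H | f σ ≤ a + δ}) ∧
    (∀ a : ℝ, {σ ∈ H | a ≤ g σ} ⊆ {σ ∈ H | a - δ ≤ f σ}) ∧
    ∀ p : ℕ,
      IsInterleaved k (hgPersMod k V H f p) (hgPersMod k V H g p) δ hδ0 := by
  have hδ' : ∀ σ ∈ H, |g σ - f σ| ≤ δ := fun σ hσ => abs_sub_comm (f σ) (g σ) ▸ hδ σ hσ
  have hsub := sublevel_subset_sublevel_add hδ
  have hsuper := superlevel_subset_superlevel_sub hδ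
  have hsub' := sublevel_subset_sublevel_add hδ'
  have hsuper' := superlevel_subset_superlevel_sub hδ'
  refine ⟨hsub, hsuper, hsub', hsuper', fun p => ?_⟩
  -- `hgPersMod` unfolds to `PersMod.ofSubquotients` of its cycles and boundaries.
  exact PersMod.isInterleaved_ofSubquotients
    (fun _ _ => hgCycOf_mono k V H f p) (fun _ _ => hgBdryOf_mono k V H f p)
    (fun _ _ => hgCycOf_mono k V H g p) (fun _ _ => hgBdryOf_mono k V H g p) hδ0
    (hgCycOf_le_hgCycOf_shift hsub hsuper p) (hgBdryOf_le_hgBdryOf_shift hsub hsuper p)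
    (hgCycOf_le_hgCycOf_shift hsub' hsuper' p) (hgBdryOf_le_hgBdryOf_shift hsub' hsuper' p)

/-- **Stability for extended persistent embedded homology of hypergraphs**
(Theorem 5.14 of the paper).  If `f, g` are two real valued functions on the
hypergraph `H` with `‖f - g‖_∞ ≤ δ`, then the sublevel hypergraphs of `f`
include into the `δ`-shifted sublevel hypergraphs of `g` (and symmetrically,
and likewise for superlevel hypergraphs), and consequently the extended
persistence modules `V^f_p` and `V^g_p` are `δ`-interleaved for every `p`. -/
theorem hypergraph_homology_stability (k V : Type) [Field k] [LinearOrder V]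
    [Fintype V]
    (H : Set (Finset V)) (hH : ∀ σ ∈ H, σ.Nonempty)
    (f g : Finset V → ℝ) (δ : ℝ) (hδ0 : 0 ≤ δ)
    (hδ : ∀ σ ∈ H, |f σ - g σ| ≤ δ) :
    (∀ a : ℝ, {σ ∈ H | f σ ≤ a} ⊆ {σ ∈ H | g σ ≤ a + δ}) ∧
    (∀ a : ℝ, {σ ∈ H | a ≤ f σ} ⊆ {σ ∈ H | a - δ ≤ g σ}) ∧
    (∀ a : ℝ, {σ ∈ H | g σ ≤ a} ⊆ {σ ∈ H | f σ ≤ a + δ}) ∧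
    (∀ a : ℝ, {σ ∈ H | a ≤ g σ} ⊆ {σ ∈ H | a - δ ≤ f σ}) ∧
    ∀ p : ℕ,
      IsInterleaved k (hgPersMod k V H f p) (hgPersMod k V H g p) δ hδ0 :=
  hypergraph_homology_stability_general k V H f g δ hδ0 hδ
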